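/- arXiv:1801.03675 — 5 statements merged into one kernel-verified Lean document; each statement's English description precedes it below -/
import Mathlib

section
/- Let κ > 0, ω_d ∈ ℝ and ξ ∈ L¹(ℝ, ℂ). Define ν(t) = ξ(t) − κ ∫_{−∞}^{t} e^{−(κ/2 + i·ω_d)(t − r)} ξ(r) dr. Then ν ∈ L¹(ℝ, ℂ) and for every ω ∈ ℝ: ∫_{−∞}^{∞} e^{−i ω t} ν(t) dt = ((iω + i·ω_d − κ/2)/(iω + i·ω_d + κ/2)) · ∫_{−∞}^{∞} e^{−i ω t} ξ(t) dt. -/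
/-!
With `a = κ/2 + i ω_d`, the output is `ν = ξ - κ (ξ ⋆ g)` for the causal kernel
`g(s) = 1_{s ≥ 0} e^{-a s}`, which is integrable since `Re a = κ/2 > 0`. The Fourier transform
turns the convolution into a product, and `ĝ(ω) = 1/(iω + a)`, so
`ν̂ = (1 - κ/(iω + a)) ξ̂ = (iω + a - κ)/(iω + a) · ξ̂`.
-/

open MeasureTheory Complex Set Convolution FourierTransform

noncomputable def causalExp (a : ℂ) : ℝ → ℂ :=
  (Ici 0).indicator fun s => exp (-(a * s))

lemma integrable_causalExp {a : ℂ} (ha : 0 < a.re) : Integrable (causalExp a) := by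
  rw [causalExp, integrable_indicator_iff measurableSet_Ici, integrableOn_Ici_iff_integrableOn_Ioi]
  simpa using integrableOn_exp_mul_complex_Ioi (a := -a) (by simpa using ha) 0

lemma setIntegral_Iic_exp_mul_eq_convolution (f : ℝ → ℂ) (a : ℂ) (t : ℝ) :
    ∫ r in Iic t, exp (-a * (t - r)) * f r
      = (f ⋆[ContinuousLinearMap.mul ℂ ℂ] causalExp a) t := by
  rw [convolution_def, ← integral_indicator measurableSet_Iic]
  congr 1 with r
  by_cases hr : r ≤ t
  · have : (0 : ℝ) ≤ t - r := sub_nonneg.mpr hr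
    simp [causalExp, hr, this, mul_comm]
  · have : ¬ (0 : ℝ) ≤ t - r := by linarith
    simp [causalExp, hr, this]

lemma integral_cexp_neg_mul_eq_fourier (f : ℝ → ℂ) (ω : ℝ) :
    ∫ t : ℝ, exp (-(I * ω * t)) * f t = 𝓕 f (ω / (2 * Real.pi)) := by
  rw [Real.fourier_real_eq_integral_exp_smul]
  congr 1 with t
  rw [smul_eq_mul]
  congr 2
  push_cast
  field_simp

lemma MeasureTheory.Integrable.cexp_neg_mul {f : ℝ → ℂ} (hf : Integrable f) (ω : ℝ) :
    Integrable fun t : ℝ => exp (-(I * ω * t)) * f t := by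
  refine hf.bdd_mul (c := 1) (by fun_prop) (Filter.Eventually.of_forall fun t => ?_)
  simp [norm_exp]

lemma integral_cexp_neg_mul_convolution {f g : ℝ → ℂ} (hf : Integrable f) (hg : Integrable g)
    (ω : ℝ) :
    ∫ t : ℝ, exp (-(I * ω * t)) * (f ⋆[ContinuousLinearMap.mul ℂ ℂ] g) t
      = (∫ t : ℝ, exp (-(I * ω * t)) * f t) * ∫ t : ℝ, exp (-(I * ω * t)) * g t := by
  simp only [integral_cexp_neg_mul_eq_fourier]
  exact Real.fourier_mul_convolution_eq hf hg _

lemma integral_cexp_neg_mul_causalExp {a : ℂ} (ha : 0 < a.re) (ω : ℝ) :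
    ∫ t : ℝ, exp (-(I * ω * t)) * causalExp a t = 1 / (I * ω + a) := by
  have hre : (-(I * ω + a)).re < 0 := by simpa using ha
  have hprod : ∀ t : ℝ, exp (-(I * ω * t)) * causalExp a t
      = (Ici 0).indicator (fun t : ℝ => exp (-(I * ω + a) * t)) t := by
    intro t
    by_cases ht : (0 : ℝ) ≤ t
    · simp only [causalExp, indicator_of_mem (mem_Ici.mpr ht), ← exp_add]
      ring_nf
    · simp [causalExp, ht]
  simp_rw [hprod]
  rw [integral_indicator measurableSet_Ici, integral_Ici_eq_integral_Ioi,
    integral_exp_mul_complex_Ioi hre]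
  field_simp
  simp

theorem stmt_3 (κ ω_d : ℝ) (hκ : 0 < κ) (ξ : ℝ → ℂ) (hξ : Integrable ξ)
    (ν : ℝ → ℂ)
    (hν : ∀ t : ℝ, ν t = ξ t - (κ : ℂ) *
      ∫ r in Set.Iic t,
        Complex.exp (-((κ : ℂ) / 2 + Complex.I * (ω_d : ℂ)) * ((t : ℂ) - (r : ℂ))) * ξ r) :
    Integrable ν ∧
    ∀ ω : ℝ, (∫ t : ℝ, Complex.exp (-(Complex.I * (ω : ℂ) * (t : ℂ))) * ν t)
      = ((Complex.I * (ω : ℂ) + Complex.I * (ω_d : ℂ) - (κ : ℂ) / 2) /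
          (Complex.I * (ω : ℂ) + Complex.I * (ω_d : ℂ) + (κ : ℂ) / 2)) *
        ∫ t : ℝ, Complex.exp (-(Complex.I * (ω : ℂ) * (t : ℂ))) * ξ t := by
  set a : ℂ := κ / 2 + I * ω_d
  have ha : 0 < a.re := by simp [a, hκ]
  set η := ξ ⋆[ContinuousLinearMap.mul ℂ ℂ] causalExp a
  have hη : Integrable η :=
    hξ.integrable_convolution (ContinuousLinearMap.mul ℂ ℂ) (integrable_causalExp ha)
  have hνη : ν = ξ - (κ : ℂ) • η := by
    ext t
    rw [hν, setIntegral_Iic_exp_mul_eq_convolution]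
    rfl
  refine ⟨hνη ▸ hξ.sub (hη.smul _), fun ω => ?_⟩
  have hsplit : ∀ t : ℝ, exp (-(I * ω * t)) * ν t
      = exp (-(I * ω * t)) * ξ t - κ * (exp (-(I * ω * t)) * η t) := by
    intro t
    rw [hνη]
    simp only [Pi.sub_apply, Pi.smul_apply, smul_eq_mul]
    ring
  simp_rw [hsplit]
  rw [integral_sub (hξ.cexp_neg_mul ω) ((hη.cexp_neg_mul ω).const_mul _), integral_const_mul,
    integral_cexp_neg_mul_convolution hξ (integrable_causalExp ha),
    integral_cexp_neg_mul_causalExp ha]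
  have hne : I * ω + a ≠ 0 := fun h => by simpa [a, hκ.ne'] using congrArg re h
  rw [show I * ω + I * ω_d + κ / 2 = I * ω + a by ring,
    show I * ω + I * ω_d - κ / 2 = I * ω + a - κ by ring]
  field_simp
end

section
/- Let κ > 0 and ω_d ∈ ℝ. For ξ ∈ L¹(ℝ, ℂ) define (Tξ)(t) = ξ(t) − κ ∫_{−∞}^{t} e^{−(κ/2 + i·ω_d)(t − r)} ξ(r) dr and (T′ξ)(t) = ξ(t) − κ ∫_{t}^{∞} e^{(κ/2 − i·ω_d)(t − r)} ξ(r) dr. Then T and T′ map L¹(ℝ, ℂ) into itself and, for every ξ ∈ L¹(ℝ, ℂ), T′(Tξ) = ξ almost everywhere and T(T′ξ) = ξ almost everywhere. -/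
open MeasureTheory Complex

/-- The causal filter associated with the impulse response
`g_G(t) = δ(t) − κ e^{−(κ/2 + i ω_d)t}` (t ≥ 0). -/
noncomputable def Tfilter (κ ω_d : ℝ) (ξ : ℝ → ℂ) : ℝ → ℂ := fun t =>
  ξ t - (κ : ℂ) *
    ∫ r in Set.Iic t,
      Complex.exp (-((κ : ℂ) / 2 + Complex.I * (ω_d : ℂ)) * ((t : ℂ) - (r : ℂ))) * ξ r

/-- The anticausal filter whose Fourier multiplier is `1/G(iω)`. -/
noncomputable def Tfilter' (κ ω_d : ℝ) (ξ : ℝ → ℂ) : ℝ → ℂ := fun t =>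
  ξ t - (κ : ℂ) *
    ∫ r in Set.Ici t,
      Complex.exp (((κ : ℂ) / 2 - Complex.I * (ω_d : ℂ)) * ((t : ℂ) - (r : ℂ))) * ξ r

/-!
Both filters are of the form `ξ ↦ ξ - ξ ⋆ k`, with the one-sided exponential kernels
`g u = κ e^{-(κ/2 + iω_d) u} 1_{u ≥ 0}` and `h u = κ e^{(κ/2 - iω_d) u} 1_{u < 0}`.
Since the two exponents add up to `κ`, a direct computation gives `g ⋆ h = g + h`. Convolution of
`L¹` functions is associative (a.e.) and commutative, so `(1 - H)(1 - G) = 1 - G - H + G H = 1`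
and likewise `(1 - G)(1 - H) = 1`.
-/

open Set ContinuousLinearMap
open scoped Convolution

section IntegrableConvolution

variable {G 𝕜 : Type*} [RCLike 𝕜] [AddGroup G] [MeasurableSpace G] {μ : Measure G}

theorem MeasureTheory.ConvolutionExistsAt.sub_distrib {f f' g : G → 𝕜} {x : G}
    (hfg : ConvolutionExistsAt f g x (mul 𝕜 𝕜) μ) (hf'g : ConvolutionExistsAt f' g x (mul 𝕜 𝕜) μ) :
    ((f - f') ⋆[mul 𝕜 𝕜, μ] g) x = (f ⋆[mul 𝕜 𝕜, μ] g) x - (f' ⋆[mul 𝕜 𝕜, μ] g) x := by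
  simp only [convolution_def, map_sub₂, Pi.sub_apply, integral_sub hfg hf'g]

variable [MeasurableAdd₂ G] [MeasurableNeg G] [SFinite μ] [μ.IsAddRightInvariant]

theorem MeasureTheory.Integrable.convolution_assoc_ae {f g k : G → 𝕜} (hf : Integrable f μ)
    (hg : Integrable g μ) (hk : Integrable k μ) :
    (f ⋆[mul 𝕜 𝕜, μ] g) ⋆[mul 𝕜 𝕜, μ] k =ᵐ[μ] f ⋆[mul 𝕜 𝕜, μ] (g ⋆[mul 𝕜 𝕜, μ] k) := by
  filter_upwards [hf.norm.ae_convolution_exists (mul ℝ ℝ)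
    (hg.norm.integrable_convolution (mul ℝ ℝ) hk.norm)] with x hx
  exact convolution_assoc _ _ _ _ mul_assoc hf.1 hg.1 hk.1 (hf.ae_convolution_exists _ hg)
    (hg.norm.ae_convolution_exists _ hk.norm) hx

theorem sub_convolution_sub_convolution_ae_eq {k₁ k₂ ξ : G → 𝕜} (hk₁ : Integrable k₁ μ)
    (hk₂ : Integrable k₂ μ) (hk : k₁ ⋆[mul 𝕜 𝕜, μ] k₂ = k₁ + k₂) (hξ : Integrable ξ μ) :
    (ξ - ξ ⋆[mul 𝕜 𝕜, μ] k₁) - (ξ - ξ ⋆[mul 𝕜 𝕜, μ] k₁) ⋆[mul 𝕜 𝕜, μ] k₂ =ᵐ[μ] ξ := by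
  filter_upwards [hξ.ae_convolution_exists (mul 𝕜 𝕜) hk₁, hξ.ae_convolution_exists (mul 𝕜 𝕜) hk₂,
    (hξ.integrable_convolution (mul 𝕜 𝕜) hk₁).ae_convolution_exists (mul 𝕜 𝕜) hk₂,
    hξ.convolution_assoc_ae hk₁ hk₂] with t h₁ h₂ h₁₂ hassoc
  rw [Pi.sub_apply, Pi.sub_apply, h₂.sub_distrib h₁₂, hassoc, hk, h₁.distrib_add h₂]
  ring

end IntegrableConvolution

noncomputable def causalExpKernel (a : ℂ) : ℝ → ℂ :=
  (Ici 0).indicator fun u => cexp (-a * u)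

noncomputable def anticausalExpKernel (b : ℂ) : ℝ → ℂ :=
  (Iio 0).indicator fun u => cexp (b * u)

theorem integrable_causalExpKernel {a : ℂ} (ha : 0 < a.re) : Integrable (causalExpKernel a) := by
  rw [causalExpKernel, integrable_indicator_iff measurableSet_Ici,
    integrableOn_Ici_iff_integrableOn_Ioi]
  exact integrableOn_exp_mul_complex_Ioi (by simpa using ha) 0

theorem integrable_anticausalExpKernel {b : ℂ} (hb : 0 < b.re) :
    Integrable (anticausalExpKernel b) := by
  rw [anticausalExpKernel, integrable_indicator_iff measurableSet_Iio]
  exact (integrableOn_exp_mul_complex_Iic hb 0).mono_set Iio_subset_Iic_self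

theorem causalExpKernel_convolution_anticausalExpKernel {a b : ℂ} (hab : 0 < (a + b).re) :
    causalExpKernel a ⋆[mul ℂ ℂ] anticausalExpKernel b =
      (a + b)⁻¹ • (causalExpKernel a + anticausalExpKernel b) := by
  funext u
  have integrand : (fun s : ℝ => mul ℂ ℂ (causalExpKernel a s) (anticausalExpKernel b (u - s))) =
      (Ici 0 ∩ Ioi u).indicator fun s => cexp (b * u) * cexp (-(a + b) * s) := by
    funext s
    by_cases hs : s ∈ Ici 0 ∩ Ioi u
    · simp only [causalExpKernel, anticausalExpKernel, mul_apply', indicator_of_mem hs,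
        indicator_of_mem hs.1, indicator_of_mem (mem_Iio.2 (sub_neg.2 (mem_Ioi.1 hs.2))),
        ← Complex.exp_add]
      push_cast
      ring_nf
    · rw [indicator_of_notMem hs]
      rcases not_and_or.1 hs with hs | hs
      · simp [causalExpKernel, indicator_of_notMem hs]
      · simp [anticausalExpKernel, not_lt.1 (mt mem_Ioi.2 hs)]
  have hre : (-(a + b)).re < 0 := by rw [neg_re]; exact neg_neg_of_pos hab
  rw [convolution_def, integrand, integral_indicator (measurableSet_Ici.inter measurableSet_Ioi),
    integral_const_mul]
  rcases le_or_gt 0 u with hu | hu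
  · rw [inter_eq_self_of_subset_right (Ioi_subset_Ici hu), integral_exp_mul_complex_Ioi hre]
    simp only [Pi.smul_apply, Pi.add_apply, causalExpKernel, anticausalExpKernel, smul_eq_mul,
      indicator_of_mem (show u ∈ Ici 0 from hu),
      indicator_of_notMem (show u ∉ Iio 0 from not_lt.2 hu)]
    rw [neg_div_neg_eq, ← mul_div_assoc, ← Complex.exp_add, add_zero, div_eq_inv_mul]
    ring_nf
  · rw [inter_eq_self_of_subset_left (Ici_subset_Ioi.2 hu), integral_Ici_eq_integral_Ioi,
      integral_exp_mul_complex_Ioi hre]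
    simp only [Pi.smul_apply, Pi.add_apply, causalExpKernel, anticausalExpKernel, smul_eq_mul,
      indicator_of_notMem (show u ∉ Ici 0 from not_le.2 hu),
      indicator_of_mem (show u ∈ Iio 0 from hu)]
    rw [neg_div_neg_eq, Complex.ofReal_zero, mul_zero, Complex.exp_zero, zero_add, div_eq_inv_mul,
      mul_comm, mul_one]

theorem smul_causalExpKernel_convolution_smul_anticausalExpKernel {a b c : ℂ} (hc : a + b = c)
    (hc₀ : 0 < c.re) :
    (c • causalExpKernel a) ⋆[mul ℂ ℂ] (c • anticausalExpKernel b) =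
      c • causalExpKernel a + c • anticausalExpKernel b := by
  have hc₀' : c ≠ 0 := fun h => by simp [h] at hc₀
  rw [smul_convolution, convolution_smul, causalExpKernel_convolution_anticausalExpKernel
    (hc ▸ hc₀), hc, smul_smul, smul_smul, mul_inv_cancel_right₀ hc₀', smul_add]

theorem Tfilter_eq_sub_convolution (κ ω_d : ℝ) (ξ : ℝ → ℂ) :
    Tfilter κ ω_d ξ =
      ξ - ξ ⋆[mul ℂ ℂ] ((κ : ℂ) • causalExpKernel ((κ : ℂ) / 2 + I * ω_d)) := by
  funext t
  have integrand : (fun r => mul ℂ ℂ (ξ r)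
      (((κ : ℂ) • causalExpKernel ((κ : ℂ) / 2 + I * ω_d)) (t - r))) = (Iic t).indicator
        fun r => (κ : ℂ) * (cexp (-((κ : ℂ) / 2 + I * ω_d) * (t - r)) * ξ r) := by
    funext r
    by_cases hr : r ∈ Iic t
    · simp only [mul_apply', Pi.smul_apply, smul_eq_mul, causalExpKernel, indicator_of_mem hr,
        indicator_of_mem (mem_Ici.2 (sub_nonneg.2 (mem_Iic.1 hr)))]
      push_cast
      ring
    · simp [causalExpKernel, not_le.1 (mt mem_Iic.2 hr)]
  rw [Tfilter, Pi.sub_apply, convolution_def, integrand, integral_indicator measurableSet_Iic,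
    integral_const_mul]

theorem Tfilter'_eq_sub_convolution (κ ω_d : ℝ) (ξ : ℝ → ℂ) :
    Tfilter' κ ω_d ξ =
      ξ - ξ ⋆[mul ℂ ℂ] ((κ : ℂ) • anticausalExpKernel ((κ : ℂ) / 2 - I * ω_d)) := by
  funext t
  have integrand : (fun r => mul ℂ ℂ (ξ r)
      (((κ : ℂ) • anticausalExpKernel ((κ : ℂ) / 2 - I * ω_d)) (t - r))) = (Ioi t).indicator
        fun r => (κ : ℂ) * (cexp (((κ : ℂ) / 2 - I * ω_d) * (t - r)) * ξ r) := by
    funext r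
    by_cases hr : r ∈ Ioi t
    · simp only [mul_apply', Pi.smul_apply, smul_eq_mul, anticausalExpKernel, indicator_of_mem hr,
        indicator_of_mem (mem_Iio.2 (sub_neg.2 (mem_Ioi.1 hr)))]
      push_cast
      ring
    · simp [anticausalExpKernel, not_lt.1 (mt mem_Ioi.2 hr)]
  rw [Tfilter', Pi.sub_apply, convolution_def, integrand, integral_indicator measurableSet_Ioi,
    integral_const_mul, integral_Ici_eq_integral_Ioi]

theorem stmt_5 (κ ω_d : ℝ) (hκ : 0 < κ) :
    (∀ ξ : ℝ → ℂ, Integrable ξ → Integrable (Tfilter κ ω_d ξ)) ∧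
    (∀ ξ : ℝ → ℂ, Integrable ξ → Integrable (Tfilter' κ ω_d ξ)) ∧
    (∀ ξ : ℝ → ℂ, Integrable ξ →
      Tfilter' κ ω_d (Tfilter κ ω_d ξ) =ᵐ[volume] ξ) ∧
    (∀ ξ : ℝ → ℂ, Integrable ξ →
      Tfilter κ ω_d (Tfilter' κ ω_d ξ) =ᵐ[volume] ξ) := by
  set g := (κ : ℂ) • causalExpKernel ((κ : ℂ) / 2 + I * ω_d)
  set h := (κ : ℂ) • anticausalExpKernel ((κ : ℂ) / 2 - I * ω_d)
  have hκ' : 0 < (κ : ℂ).re := by simpa using hκ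
  have hg : Integrable g := (integrable_causalExpKernel (by simpa using hκ)).smul _
  have hh : Integrable h := (integrable_anticausalExpKernel (by simpa using hκ)).smul _
  have hgh : g ⋆[mul ℂ ℂ] h = g + h :=
    smul_causalExpKernel_convolution_smul_anticausalExpKernel (by ring) hκ'
  have hhg : h ⋆[mul ℂ ℂ] g = h + g := by
    rw [← flip_mul, convolution_flip, hgh, add_comm]
  simp only [Tfilter_eq_sub_convolution, Tfilter'_eq_sub_convolution]
  exact ⟨fun ξ hξ => hξ.sub (hξ.integrable_convolution _ hg),
    fun ξ hξ => hξ.sub (hξ.integrable_convolution _ hh),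
    fun ξ hξ => sub_convolution_sub_convolution_ae_eq hg hh hgh hξ,
    fun ξ hξ => sub_convolution_sub_convolution_ae_eq hh hg hhg hξ⟩
end

section
/- Let κ > 0, ω_d ∈ ℝ and ξ₁, ξ₂ ∈ L¹(ℝ, ℂ) ∩ L²(ℝ, ℂ). Define ν_j(t) = ξ_j(t) − κ ∫_{−∞}^{t} e^{−(κ/2 + i·ω_d)(t − r)} ξ_j(r) dr. Then ∫_{−∞}^{∞} ∫_{−∞}^{∞} |ν₁(p₁)ν₂(p₂) + ν₁(p₂)ν₂(p₁)|² dp₁ dp₂ = 2·(∫|ξ₁|²)(∫|ξ₂|²) + 2·|∫ conj(ξ₁(t)) ξ₂(t) dt|². In particular, if ∫|ξ₁|² = ∫|ξ₂|² = 1 then this double integral equals 2(1 + |⟨ξ₁, ξ₂⟩|²) = 2 N₂, where N₂ = 1 + |⟨ξ₁, ξ₂⟩|². -/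
/-! Write `a = κ/2 + i ω_d` and `K(u) = 1_{u ≥ 0} e^{-a u}`, so that `ν = ξ - 2 Re a · (ξ ⋆ K)`.
By Fubini, `2 Re a · ⟪ξ₁ ⋆ K, ξ₂ ⋆ K⟫` is an integral against the autocorrelation of `K`, and
`2 Re a ∫ conj K(t - r) K(t - s) dt = K(r - s) + conj K(s - r)` for `r ≠ s`; hence it equals
`⟪ξ₁ ⋆ K, ξ₂⟫ + ⟪ξ₁, ξ₂ ⋆ K⟫`, which is exactly the statement that `ξ ↦ ν` preserves
`⟪ξ₁, ξ₂⟫ = ∫ conj ξ₁ ξ₂`. The two-photon integral is the squared norm of the symmetric tensor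
`ν₁ ⊗ ν₂ + ν₂ ⊗ ν₁`, which only depends on these inner products. -/

open MeasureTheory Complex Set ComplexConjugate
open scoped Convolution

section InnerProducts

variable {α β : Type*} [MeasurableSpace α] [MeasurableSpace β] {μ : Measure α} {ν : Measure β}

lemma integrable_conj {g : α → ℂ} (hg : Integrable g μ) : Integrable (fun x => conj (g x)) μ :=
  Complex.conjLIE.integrable_comp_iff.2 hg

lemma memLp_conj {g : α → ℂ} (hg : MemLp g 2 μ) : MemLp (fun x => conj (g x)) 2 μ :=
  hg.of_le (Complex.continuous_conj.comp_aestronglyMeasurable hg.1) (.of_forall fun _ => by simp)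

lemma integrable_conj_mul {f g : α → ℂ} (hf : MemLp f 2 μ) (hg : MemLp g 2 μ) :
    Integrable (fun x => conj (f x) * g x) μ :=
  (memLp_conj hf).integrable_mul hg

lemma ofReal_integral_norm_sq (g : α → ℂ) :
    ((∫ x, ‖g x‖ ^ 2 ∂μ : ℝ) : ℂ) = ∫ x, conj (g x) * g x ∂μ := by
  rw [← integral_complex_ofReal]
  congr 1 with x
  push_cast
  exact (conj_mul' _).symm

lemma integral_integral_sum_mul {ι 𝕜 : Type*} [RCLike 𝕜] (s : Finset ι) {F : ι → α → 𝕜}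
    {G : ι → β → 𝕜} (hF : ∀ i ∈ s, Integrable (F i) μ) (hG : ∀ i ∈ s, Integrable (G i) ν) :
    ∫ y, ∫ x, ∑ i ∈ s, F i x * G i y ∂μ ∂ν = ∑ i ∈ s, (∫ x, F i x ∂μ) * ∫ y, G i y ∂ν := by
  simp_rw [integral_finsetSum s fun i hi => (hF i hi).mul_const _, integral_mul_const]
  rw [integral_finsetSum s fun i hi => (hG i hi).const_mul _]
  simp_rw [integral_const_mul]

lemma ofReal_integral_integral_norm_sq_sum_mul {ι : Type*} (s : Finset ι) {F : ι → α → ℂ}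
    {G : ι → β → ℂ} (hF : ∀ i ∈ s, MemLp (F i) 2 μ) (hG : ∀ i ∈ s, MemLp (G i) 2 ν) :
    ((∫ y, ∫ x, ‖∑ i ∈ s, F i x * G i y‖ ^ 2 ∂μ ∂ν : ℝ) : ℂ)
      = ∑ i ∈ s, ∑ j ∈ s,
          (∫ x, conj (F i x) * F j x ∂μ) * ∫ y, conj (G i y) * G j y ∂ν := by
  have hexpand (x : α) (y : β) : ((‖∑ i ∈ s, F i x * G i y‖ ^ 2 : ℝ) : ℂ)
      = ∑ p ∈ s ×ˢ s, conj (F p.1 x) * F p.2 x * (conj (G p.1 y) * G p.2 y) := by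
    push_cast
    rw [← conj_mul', map_sum, Finset.sum_mul_sum, Finset.sum_product]
    refine Finset.sum_congr rfl fun i _ => Finset.sum_congr rfl fun j _ => ?_
    rw [map_mul]
    ring
  simp_rw [← integral_complex_ofReal, hexpand]
  rw [integral_integral_sum_mul _
    (fun p hp => integrable_conj_mul (hF _ (Finset.mem_product.1 hp).1)
      (hF _ (Finset.mem_product.1 hp).2))
    (fun p hp => integrable_conj_mul (hG _ (Finset.mem_product.1 hp).1)
      (hG _ (Finset.mem_product.1 hp).2)), Finset.sum_product]

lemma integral_integral_norm_sq_symm {f g : α → ℂ} (hf : MemLp f 2 μ) (hg : MemLp g 2 μ) :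
    ∫ y, ∫ x, ‖f x * g y + f y * g x‖ ^ 2 ∂μ ∂μ
      = 2 * (∫ x, ‖f x‖ ^ 2 ∂μ) * (∫ x, ‖g x‖ ^ 2 ∂μ)
        + 2 * ‖∫ x, conj (f x) * g x ∂μ‖ ^ 2 := by
  have hsum (x y : α) : f x * g y + f y * g x = ∑ i, ![f, g] i x * ![g, f] i y := by
    simp [Fin.sum_univ_two, mul_comm]
  have hswap : ∫ x, conj (g x) * f x ∂μ = conj (∫ x, conj (f x) * g x ∂μ) := by
    rw [← integral_conj]
    simp_rw [map_mul, conj_conj, mul_comm]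
  apply ofReal_injective
  simp_rw [hsum]
  rw [ofReal_integral_integral_norm_sq_sum_mul _ (by simp [Fin.forall_fin_two, hf, hg])
    (by simp [Fin.forall_fin_two, hf, hg])]
  simp only [Fin.sum_univ_two, Matrix.cons_val_zero, Matrix.cons_val_one]
  push_cast
  rw [hswap, ofReal_integral_norm_sq, ofReal_integral_norm_sq, ← conj_mul']
  ring

end InnerProducts

section ExpFilter

variable {a : ℂ}

noncomputable def expKernel (a : ℂ) : ℝ → ℂ := indicator (Ici 0) fun u => cexp (-a * u)

noncomputable def expFilter (a : ℂ) (f : ℝ → ℂ) : ℝ → ℂ :=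
  f ⋆[ContinuousLinearMap.mul ℂ ℂ] expKernel a

lemma measurable_expKernel : Measurable (expKernel a) :=
  (by fun_prop : Measurable fun u : ℝ => cexp (-a * u)).indicator measurableSet_Ici

lemma norm_expKernel_le_one (ha : 0 ≤ a.re) (u : ℝ) : ‖expKernel a u‖ ≤ 1 := by
  by_cases hu : 0 ≤ u
  · simp only [expKernel, indicator_of_mem (mem_Ici.2 hu), Complex.norm_exp]
    simpa using mul_nonneg ha hu
  · simp [expKernel, hu]

lemma integrable_expKernel (ha : 0 < a.re) : Integrable (expKernel a) := by
  rw [expKernel, integrable_indicator_iff measurableSet_Ici, integrableOn_Ici_iff_integrableOn_Ioi]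
  exact integrableOn_exp_mul_complex_Ioi (by simpa using ha) 0

lemma MeasureTheory.Integrable.mul_expKernel_comp {α : Type*} [MeasurableSpace α] {μ : Measure α}
    (ha : 0 ≤ a.re) {g : α → ℂ} (hg : Integrable g μ) {φ : α → ℝ} (hφ : Measurable φ) :
    Integrable (fun x => g x * expKernel a (φ x)) μ :=
  hg.mul_bdd (measurable_expKernel.comp hφ).aestronglyMeasurable
    (.of_forall fun _ => norm_expKernel_le_one ha _)

lemma expFilter_apply (a : ℂ) (f : ℝ → ℂ) (t : ℝ) :
    expFilter a f t = ∫ r, f r * expKernel a (t - r) := rfl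

lemma expFilter_eq_setIntegral (a : ℂ) (f : ℝ → ℂ) (t : ℝ) :
    expFilter a f t = ∫ r in Iic t, cexp (-a * (t - r)) * f r := by
  rw [expFilter_apply, ← integral_indicator measurableSet_Iic]
  congr 1 with r
  by_cases h : r ≤ t <;> simp [expKernel, h, mul_comm]

lemma norm_expFilter_le (ha : 0 ≤ a.re) {f : ℝ → ℂ} (hf : Integrable f) (t : ℝ) :
    ‖expFilter a f t‖ ≤ ∫ r, ‖f r‖ :=
  norm_integral_le_of_norm_le hf.norm <| .of_forall fun r => by
    simpa [norm_mul] using mul_le_of_le_one_right (norm_nonneg _) (norm_expKernel_le_one ha (t - r))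

lemma integrable_expFilter (ha : 0 < a.re) {f : ℝ → ℂ} (hf : Integrable f) :
    Integrable (expFilter a f) :=
  hf.integrable_convolution _ (integrable_expKernel ha)

lemma memLp_two_expFilter (ha : 0 < a.re) {f : ℝ → ℂ} (hf : Integrable f) :
    MemLp (expFilter a f) 2 := by
  have hS := integrable_expFilter ha hf
  rw [memLp_two_iff_integrable_sq_norm hS.1]
  simpa [sq] using hS.norm.bdd_mul hS.norm.1 (.of_forall fun t => by
    simpa using norm_expFilter_le ha.le hf t)

lemma integral_Ioi_conj_exp_mul_exp (ha : 0 < a.re) (m r s : ℝ) :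
    2 * a.re * ∫ t in Ioi m, conj (cexp (-a * (t - r))) * cexp (-a * (t - s))
      = cexp (conj a * (r - m) + a * (s - m)) := by
  have hre : (2 * a.re : ℂ) = a + conj a := by rw [re_eq_add_conj]; ring
  have hc : (2 * a.re : ℂ) ≠ 0 := by exact_mod_cast (by positivity : 2 * a.re ≠ 0)
  have hexp (t : ℝ) : conj (cexp (-a * (t - r))) * cexp (-a * (t - s))
      = cexp (-(2 * a.re) * t) * cexp (conj a * r + a * s) := by
    rw [← exp_conj, ← exp_add, ← exp_add, hre]
    congr 1
    simp only [map_mul, map_neg, map_sub, conj_ofReal]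
    ring
  simp_rw [hexp]
  rw [integral_mul_const, integral_exp_mul_complex_Ioi (by simpa using ha), neg_div_neg_eq,
    ← mul_assoc, mul_div_cancel₀ _ hc, ← exp_add, hre]
  ring_nf

lemma expKernel_autocorrelation (ha : 0 < a.re) {r s : ℝ} (hrs : r ≠ s) :
    2 * a.re * ∫ t, conj (expKernel a (t - r)) * expKernel a (t - s)
      = expKernel a (r - s) + conj (expKernel a (s - r)) := by
  have hind : (fun t : ℝ => conj (expKernel a (t - r)) * expKernel a (t - s))
      = indicator (Ici (max r s)) fun t => conj (cexp (-a * (t - r))) * cexp (-a * (t - s)) := by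
    ext t
    by_cases h₁ : r ≤ t <;> by_cases h₂ : s ≤ t <;> simp [expKernel, h₁, h₂]
  rw [hind, integral_indicator measurableSet_Ici, integral_Ici_eq_integral_Ioi,
    integral_Ioi_conj_exp_mul_exp ha]
  rcases hrs.lt_or_gt with h | h
  all_goals
    simp [expKernel, h.not_ge, h.le, ← exp_conj]
    ring_nf

lemma integrable_conj_mul_mul_expKernel (ha : 0 ≤ a.re) {g h : ℝ → ℂ} (hg : Integrable g)
    (hh : Integrable h) :
    Integrable (fun p : ℝ × ℝ => conj (g p.1) * (h p.2 * expKernel a (p.1 - p.2)))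
      (volume.prod volume) := by
  simpa only [mul_assoc] using
    ((integrable_conj hg).mul_prod hh).mul_expKernel_comp ha
      (by fun_prop : Measurable fun p : ℝ × ℝ => p.1 - p.2)

lemma integral_conj_mul_expFilter (ha : 0 ≤ a.re) {g h : ℝ → ℂ} (hg : Integrable g)
    (hh : Integrable h) :
    ∫ t, conj (g t) * expFilter a h t = ∫ s, h s * ∫ t, conj (g t) * expKernel a (t - s) := by
  simp_rw [expFilter_apply, ← integral_const_mul]
  rw [integral_integral_swap (integrable_conj_mul_mul_expKernel ha hg hh)]
  congr 1 with s
  congr 1 with t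
  ring

lemma integrable_mul_integral_conj_mul_expKernel (ha : 0 ≤ a.re) {g h : ℝ → ℂ}
    (hg : Integrable g) (hh : Integrable h) :
    Integrable fun s => h s * ∫ t, conj (g t) * expKernel a (t - s) := by
  simp_rw [← integral_const_mul]
  refine (integrable_conj_mul_mul_expKernel ha hg hh).integral_prod_right.congr
    (.of_forall fun s => ?_)
  dsimp only
  congr 1 with t
  ring

lemma two_re_mul_integral_conj_expFilter_mul_expKernel (ha : 0 < a.re) {f : ℝ → ℂ}
    (hf : Integrable f) (s : ℝ) :
    2 * a.re * ∫ t, conj (expFilter a f t) * expKernel a (t - s)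
      = (∫ r, conj (f r) * expKernel a (r - s)) + conj (expFilter a f s) := by
  have hK : Integrable fun t => expKernel a (t - s) := (integrable_expKernel ha).comp_sub_right s
  have hadj : ∫ t, conj (expFilter a f t) * expKernel a (t - s)
      = ∫ r, conj (f r) * ∫ t, conj (expKernel a (t - r)) * expKernel a (t - s) := by
    simpa only [← integral_conj, map_mul, conj_conj, mul_comm]
      using congrArg conj (integral_conj_mul_expFilter ha.le hK hf)
  have hcorr : (fun r => conj (f r) *
        (2 * a.re * ∫ t, conj (expKernel a (t - r)) * expKernel a (t - s)))
      =ᵐ[volume] fun r => conj (f r) * expKernel a (r - s) + conj (f r * expKernel a (s - r)) := by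
    filter_upwards [volume.ae_ne s] with r hr
    rw [expKernel_autocorrelation ha hr, map_mul, mul_add]
  calc 2 * a.re * ∫ t, conj (expFilter a f t) * expKernel a (t - s)
      = ∫ r, conj (f r) * (2 * a.re * ∫ t, conj (expKernel a (t - r)) * expKernel a (t - s)) := by
        rw [hadj, ← integral_const_mul]
        congr 1 with r
        ring
    _ = (∫ r, conj (f r) * expKernel a (r - s)) + conj (expFilter a f s) := by
        rw [integral_congr_ae hcorr, integral_add ((integrable_conj hf).mul_expKernel_comp ha.le
            (by fun_prop)) (integrable_conj (hf.mul_expKernel_comp ha.le (by fun_prop))),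
          integral_conj, expFilter_apply]

lemma two_re_mul_integral_conj_expFilter_mul_expFilter (ha : 0 < a.re) {f h : ℝ → ℂ}
    (hf : Integrable f) (hh : Integrable h) :
    2 * a.re * ∫ t, conj (expFilter a f t) * expFilter a h t
      = (∫ t, conj (expFilter a f t) * h t) + ∫ t, conj (f t) * expFilter a h t := by
  have hSf := integrable_expFilter ha hf
  calc 2 * a.re * ∫ t, conj (expFilter a f t) * expFilter a h t
      = ∫ s, h s * (2 * a.re * ∫ t, conj (expFilter a f t) * expKernel a (t - s)) := by
        rw [integral_conj_mul_expFilter ha.le hSf hh, ← integral_const_mul]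
        congr 1 with s
        ring
    _ = ∫ s, (h s * ∫ r, conj (f r) * expKernel a (r - s)) + conj (expFilter a f s) * h s := by
        congr 1 with s
        rw [two_re_mul_integral_conj_expFilter_mul_expKernel ha hf]
        ring
    _ = _ := by
        rw [integral_add (integrable_mul_integral_conj_mul_expKernel ha.le hf hh)
          (hh.bdd_mul (integrable_conj hSf).1 (.of_forall fun s => by
            simpa using norm_expFilter_le ha.le hf s)), integral_conj_mul_expFilter ha.le hf hh,
          add_comm]

noncomputable def scatteredPulse (a : ℂ) (f : ℝ → ℂ) (t : ℝ) : ℂ := f t - 2 * a.re * expFilter a f t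

lemma memLp_two_scatteredPulse (ha : 0 < a.re) {f : ℝ → ℂ} (hf : Integrable f)
    (hf₂ : MemLp f 2) : MemLp (scatteredPulse a f) 2 :=
  hf₂.sub ((memLp_two_expFilter ha hf).const_mul _)

lemma integral_conj_scatteredPulse_mul_scatteredPulse (ha : 0 < a.re) {f h : ℝ → ℂ}
    (hf : Integrable f) (hh : Integrable h) (hf₂ : MemLp f 2) (hh₂ : MemLp h 2) :
    ∫ t, conj (scatteredPulse a f t) * scatteredPulse a h t = ∫ t, conj (f t) * h t := by
  set c : ℂ := 2 * a.re
  have hSf := memLp_two_expFilter ha hf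
  have hSh := memLp_two_expFilter ha hh
  have i₁ := integrable_conj_mul hf₂ hh₂
  have i₂ := (integrable_conj_mul hSf hh₂).const_mul c
  have i₃ := (integrable_conj_mul hf₂ hSh).const_mul c
  have i₄ := ((integrable_conj_mul hSf hSh).const_mul c).const_mul c
  calc ∫ t, conj (scatteredPulse a f t) * scatteredPulse a h t
      = ∫ t, conj (f t) * h t - c * (conj (expFilter a f t) * h t)
          - c * (conj (f t) * expFilter a h t)
          + c * (c * (conj (expFilter a f t) * expFilter a h t)) := by
        congr 1 with t
        simp only [scatteredPulse, map_sub, map_mul, conj_ofReal, map_ofNat, c]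
        ring
    _ = (∫ t, conj (f t) * h t) - c * (∫ t, conj (expFilter a f t) * h t)
          - c * (∫ t, conj (f t) * expFilter a h t)
          + c * (c * ∫ t, conj (expFilter a f t) * expFilter a h t) := by
        rw [integral_add ?_ i₄, integral_sub ?_ i₃, integral_sub i₁ i₂, integral_const_mul,
          integral_const_mul, integral_const_mul, integral_const_mul]
        · exact i₁.sub i₂
        · exact (i₁.sub i₂).sub i₃
    _ = ∫ t, conj (f t) * h t := by
        rw [two_re_mul_integral_conj_expFilter_mul_expFilter ha hf hh]
        ring

lemma integral_norm_sq_scatteredPulse (ha : 0 < a.re) {f : ℝ → ℂ} (hf : Integrable f)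
    (hf₂ : MemLp f 2) : ∫ t, ‖scatteredPulse a f t‖ ^ 2 = ∫ t, ‖f t‖ ^ 2 :=
  ofReal_injective <| by
    rw [ofReal_integral_norm_sq, ofReal_integral_norm_sq,
      integral_conj_scatteredPulse_mul_scatteredPulse ha hf hf hf₂ hf₂]

end ExpFilter

theorem stmt_11 (κ ω_d : ℝ) (hκ : 0 < κ) (ξ₁ ξ₂ : ℝ → ℂ)
    (h₁ : Integrable ξ₁) (h₂ : Integrable ξ₂)
    (h₁₂ : MemLp ξ₁ 2) (h₂₂ : MemLp ξ₂ 2)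
    (ν₁ ν₂ : ℝ → ℂ)
    (hν₁ : ∀ t : ℝ, ν₁ t = ξ₁ t - (κ : ℂ) *
      ∫ r in Set.Iic t,
        Complex.exp (-((κ : ℂ) / 2 + Complex.I * (ω_d : ℂ)) * ((t : ℂ) - (r : ℂ))) * ξ₁ r)
    (hν₂ : ∀ t : ℝ, ν₂ t = ξ₂ t - (κ : ℂ) *
      ∫ r in Set.Iic t,
        Complex.exp (-((κ : ℂ) / 2 + Complex.I * (ω_d : ℂ)) * ((t : ℂ) - (r : ℂ))) * ξ₂ r) :
    (∫ p₂ : ℝ, ∫ p₁ : ℝ, ‖ν₁ p₁ * ν₂ p₂ + ν₁ p₂ * ν₂ p₁‖ ^ 2)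
      = 2 * (∫ t : ℝ, ‖ξ₁ t‖ ^ 2) * (∫ t : ℝ, ‖ξ₂ t‖ ^ 2)
        + 2 * ‖∫ t : ℝ, (starRingEnd ℂ) (ξ₁ t) * ξ₂ t‖ ^ 2 ∧
    (((∫ t : ℝ, ‖ξ₁ t‖ ^ 2) = 1 ∧ (∫ t : ℝ, ‖ξ₂ t‖ ^ 2) = 1) →
      (∫ p₂ : ℝ, ∫ p₁ : ℝ, ‖ν₁ p₁ * ν₂ p₂ + ν₁ p₂ * ν₂ p₁‖ ^ 2)
        = 2 * (1 + ‖∫ t : ℝ, (starRingEnd ℂ) (ξ₁ t) * ξ₂ t‖ ^ 2)) := by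
  set a : ℂ := κ / 2 + I * ω_d
  have hre : 2 * a.re = κ := by simp [a]; ring
  have ha : 0 < a.re := by linarith
  have hν {ξ ν : ℝ → ℂ} (h : ∀ t : ℝ, ν t = ξ t - κ * ∫ r in Iic t, cexp (-a * (t - r)) * ξ r) :
      ν = scatteredPulse a ξ := by
    ext t
    rw [h, scatteredPulse, expFilter_eq_setIntegral, ← hre, ofReal_mul, ofReal_ofNat]
  obtain rfl := hν hν₁
  obtain rfl := hν hν₂
  have hmain := integral_integral_norm_sq_symm (memLp_two_scatteredPulse ha h₁ h₁₂)
    (memLp_two_scatteredPulse ha h₂ h₂₂)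
  rw [integral_norm_sq_scatteredPulse ha h₁ h₁₂, integral_norm_sq_scatteredPulse ha h₂ h₂₂,
    integral_conj_scatteredPulse_mul_scatteredPulse ha h₁ h₂ h₁₂ h₂₂] at hmain
  refine ⟨hmain, fun ⟨hξ₁, hξ₂⟩ => ?_⟩
  rw [hmain, hξ₁, hξ₂]
  ring
end

section
/- Let κ > 0 and let ξ : ℝ → ℂ be measurable with ξ(t) = 0 for all t > 0 and ∫_{−∞}^{0} e^{κ r} |ξ(r)| dr < ∞. Define v(t) = ξ(t) − κ ∫_{−∞}^{t} e^{−κ(t − r)} ξ(r) dr, w(t) = −κ ∫_{−∞}^{t} e^{−κ(t − r)} ξ(r) dr, and for p₁ ≥ p₂ set χ(p₁, p₂) = 4κ e^{−κ(p₁ + p₂)} ∫_{−∞}^{p₂} e^{2κ r} ξ(r) w(r) dr. Then for all p₁ ≥ p₂ > 0: v(p₁) v(p₂) + w(p₁) w(p₂) + χ(p₁, p₂) = 0, and likewise v(p₁) w(p₂) + v(p₂) w(p₁) + χ(p₁, p₂) = 0. -/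
/-!
Put `g r = e^{κ r} ξ r`, which is integrable and vanishes for `r > 0`. Then
`w t = -κ e^{-κ t} ∫_{r ≤ t} g`, and for `t > 0` this is `-κ e^{-κ t} S` with `S = ∫ g`, while
`v t = w t` there because `ξ t = 0`. The integral in `χ` becomes `-κ ∫_{r ≤ p₂} g r ∫_{y ≤ r} g y`,
and symmetrizing the double integral over the half-plane `y ≤ r` (the diagonal is null) gives
`-κ S² / 2`. So `χ p₁ p₂ = -2 w p₁ w p₂`, which cancels both products.
-/

open MeasureTheory Complex Set

section Symmetrization

variable {𝕜 : Type*} [RCLike 𝕜] {μ : Measure ℝ} [SFinite μ]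

lemma measure_prod_diagonal_eq_zero [NullSingletonClass μ] :
    (μ.prod μ) {z : ℝ × ℝ | z.1 = z.2} = 0 := by
  rw [Measure.prod_apply (measurableSet_eq_fun measurable_fst measurable_snd)]
  have hslice : ∀ x : ℝ, Prod.mk x ⁻¹' {z : ℝ × ℝ | z.1 = z.2} = {x} := by
    intro x; ext y; simp [eq_comm]
  simp [hslice]

lemma integral_mul_setIntegral_Iic {g : ℝ → 𝕜} (hg : Integrable g μ) :
    ∫ x, g x * ∫ y in Iic x, g y ∂μ ∂μ
      = ∫ z in {z : ℝ × ℝ | z.2 ≤ z.1}, g z.1 * g z.2 ∂μ.prod μ := by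
  have hmeas : MeasurableSet {z : ℝ × ℝ | z.2 ≤ z.1} :=
    measurableSet_le measurable_snd measurable_fst
  rw [← integral_indicator hmeas, integral_prod _ ((hg.mul_prod hg).indicator hmeas)]
  congr 1 with x
  rw [← integral_const_mul, ← integral_indicator measurableSet_Iic]
  congr 1 with y

lemma two_mul_integral_mul_setIntegral_Iic [NullSingletonClass μ] {g : ℝ → 𝕜}
    (hg : Integrable g μ) : 2 * ∫ x, g x * ∫ y in Iic x, g y ∂μ ∂μ = (∫ x, g x ∂μ) ^ 2 := by
  set F : ℝ × ℝ → 𝕜 := fun z => g z.1 * g z.2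
  have hF : Integrable F (μ.prod μ) := hg.mul_prod hg
  have hle : MeasurableSet {z : ℝ × ℝ | z.2 ≤ z.1} := measurableSet_le measurable_snd measurable_fst
  have hge : MeasurableSet {z : ℝ × ℝ | z.1 ≤ z.2} := measurableSet_le measurable_fst measurable_snd
  have hswap : ∫ z in {z : ℝ × ℝ | z.2 ≤ z.1}, F z ∂μ.prod μ
      = ∫ z in {z : ℝ × ℝ | z.1 ≤ z.2}, F z ∂μ.prod μ := by
    rw [← integral_indicator hle, ← integral_prod_swap, ← integral_indicator hge]
    congr 1 with z
    simp only [indicator, mem_ofPred_eq, Prod.fst_swap, Prod.snd_swap, F, mul_comm]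
  have hdisj : AEDisjoint (μ.prod μ) {z : ℝ × ℝ | z.2 ≤ z.1} {z : ℝ × ℝ | z.1 ≤ z.2} :=
    measure_mono_null (fun z hz => le_antisymm hz.2 hz.1) measure_prod_diagonal_eq_zero
  have hunion : {z : ℝ × ℝ | z.2 ≤ z.1} ∪ {z : ℝ × ℝ | z.1 ≤ z.2} = univ := by
    ext z; simp [le_total]
  calc 2 * ∫ x, g x * ∫ y in Iic x, g y ∂μ ∂μ
      = ∫ z in {z : ℝ × ℝ | z.2 ≤ z.1}, F z ∂μ.prod μ
        + ∫ z in {z : ℝ × ℝ | z.1 ≤ z.2}, F z ∂μ.prod μ := by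
        rw [integral_mul_setIntegral_Iic hg, ← hswap, two_mul]
    _ = ∫ z, F z ∂μ.prod μ := by
        rw [← setIntegral_union₀ hdisj hge.nullMeasurableSet hF.integrableOn hF.integrableOn,
          hunion, Measure.restrict_univ]
    _ = (∫ x, g x ∂μ) ^ 2 := by rw [integral_prod_mul, sq]

end Symmetrization

section Pulse

variable {κ : ℝ} {ξ : ℝ → ℂ}

lemma setIntegral_Iic_eq_integral_of_forall_pos_eq_zero {E : Type*} [NormedAddCommGroup E]
    [NormedSpace ℝ E] {f : ℝ → E} (hf : ∀ r, 0 < r → f r = 0)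
    {t : ℝ} (ht : 0 ≤ t) : ∫ r in Iic t, f r = ∫ r, f r :=
  setIntegral_eq_integral_of_forall_compl_eq_zero fun r hr => hf r (ht.trans_lt (not_le.mp hr))

lemma setIntegral_Iic_mul_setIntegral_Iic_of_forall_pos_eq_zero {g : ℝ → ℂ} (hg : Integrable g)
    (hg0 : ∀ r, 0 < r → g r = 0) {t : ℝ} (ht : 0 ≤ t) :
    ∫ r in Iic t, g r * ∫ y in Iic r, g y = (∫ r, g r) ^ 2 / 2 := by
  rw [setIntegral_Iic_eq_integral_of_forall_pos_eq_zero (fun r hr => by simp [hg0 r hr]) ht,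
    ← two_mul_integral_mul_setIntegral_Iic hg]
  ring

lemma integrable_cexp_mul_of_integrableOn_Iic (hm : Measurable ξ)
    (hsupp : ∀ t : ℝ, 0 < t → ξ t = 0)
    (hint : IntegrableOn (fun r : ℝ => Real.exp (κ * r) * ‖ξ r‖) (Iic 0)) :
    Integrable (fun r : ℝ => cexp (κ * r) * ξ r) := by
  have hmeas : Measurable (fun r : ℝ => cexp (κ * r) * ξ r) := by fun_prop
  rw [← integrableOn_univ, ← Iic_union_Ioi (a := (0 : ℝ))]
  refine IntegrableOn.union ?_ ?_
  · refine hint.mono' hmeas.aestronglyMeasurable.restrict (Filter.Eventually.of_forall fun r => ?_)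
    simp [norm_exp]
  · refine integrableOn_zero.congr_fun (fun r hr => ?_) measurableSet_Ioi
    simp [hsupp r hr]

lemma setIntegral_cexp_neg_mul_sub_mul (t : ℝ) (s : Set ℝ) :
    ∫ r in s, cexp (-(κ : ℂ) * ((t : ℂ) - (r : ℂ))) * ξ r
      = cexp (-κ * t) * ∫ r in s, cexp (κ * r) * ξ r := by
  rw [← integral_const_mul]
  congr 1 with r
  rw [← mul_assoc, ← Complex.exp_add]
  ring_nf

end Pulse

theorem stmt_16_general (κ : ℝ) (ξ : ℝ → ℂ) (hm : Measurable ξ)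
    (hsupp : ∀ t : ℝ, 0 < t → ξ t = 0)
    (hint : IntegrableOn (fun r : ℝ => Real.exp (κ * r) * ‖ξ r‖) (Set.Iic 0))
    (v w : ℝ → ℂ) (χ : ℝ → ℝ → ℂ)
    (hv : ∀ t : ℝ, v t = ξ t - (κ : ℂ) *
      ∫ r in Set.Iic t, Complex.exp (-(κ : ℂ) * ((t : ℂ) - (r : ℂ))) * ξ r)
    (hw : ∀ t : ℝ, w t = -(κ : ℂ) *
      ∫ r in Set.Iic t, Complex.exp (-(κ : ℂ) * ((t : ℂ) - (r : ℂ))) * ξ r)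
    (hχ : ∀ p₁ p₂ : ℝ, p₂ ≤ p₁ → χ p₁ p₂ = 4 * (κ : ℂ) *
      Complex.exp (-(κ : ℂ) * ((p₁ : ℂ) + (p₂ : ℂ))) *
      ∫ r in Set.Iic p₂, Complex.exp (2 * (κ : ℂ) * (r : ℂ)) * ξ r * w r) :
    ∀ p₁ p₂ : ℝ, p₂ ≤ p₁ → 0 < p₂ →
      v p₁ * v p₂ + w p₁ * w p₂ + χ p₁ p₂ = 0 ∧
      v p₁ * w p₂ + v p₂ * w p₁ + χ p₁ p₂ = 0 := by
  intro p₁ p₂ h12 hp₂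
  set g : ℝ → ℂ := fun r => cexp (κ * r) * ξ r
  have hg : Integrable g := integrable_cexp_mul_of_integrableOn_Iic hm hsupp hint
  have hg0 : ∀ r, 0 < r → g r = 0 := fun r hr => by simp [g, hsupp r hr]
  have hw' : ∀ t, w t = -κ * cexp (-κ * t) * ∫ r in Iic t, g r := fun t => by
    rw [hw, setIntegral_cexp_neg_mul_sub_mul, mul_assoc]
  have hvw : ∀ t, 0 < t → v t = w t := fun t ht => by rw [hv, hw, hsupp t ht, zero_sub, neg_mul]
  have hwS : ∀ t, 0 < t → w t = -κ * cexp (-κ * t) * ∫ r, g r := fun t ht => by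
    rw [hw', setIntegral_Iic_eq_integral_of_forall_pos_eq_zero hg0 ht.le]
  have hχint : ∫ r in Iic p₂, cexp (2 * κ * r) * ξ r * w r = -κ * (∫ r, g r) ^ 2 / 2 := by
    have hpt : ∀ r : ℝ, cexp (2 * κ * r) * ξ r * w r = -κ * (g r * ∫ y in Iic r, g y) := by
      intro r
      have hexp : cexp (2 * κ * r) * cexp (-κ * r) = cexp (κ * r) := by
        rw [← Complex.exp_add]; ring_nf
      rw [hw' r]
      linear_combination (-κ * ξ r * ∫ y in Iic r, g y) * hexp
    simp_rw [hpt]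
    rw [integral_const_mul, setIntegral_Iic_mul_setIntegral_Iic_of_forall_pos_eq_zero hg hg0 hp₂.le,
      mul_div_assoc]
  have hχS : χ p₁ p₂ = -2 * κ ^ 2 * cexp (-κ * p₁) * cexp (-κ * p₂) * (∫ r, g r) ^ 2 := by
    rw [hχ p₁ p₂ h12, hχint, mul_add, Complex.exp_add]
    ring
  rw [hvw p₁ (hp₂.trans_le h12), hvw p₂ hp₂, hwS p₁ (hp₂.trans_le h12), hwS p₂ hp₂, hχS]
  constructor <;> ring

theorem stmt_16 (κ : ℝ) (hκ : 0 < κ) (ξ : ℝ → ℂ) (hm : Measurable ξ)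
    (hsupp : ∀ t : ℝ, 0 < t → ξ t = 0)
    (hint : IntegrableOn (fun r : ℝ => Real.exp (κ * r) * ‖ξ r‖) (Set.Iic 0))
    (v w : ℝ → ℂ) (χ : ℝ → ℝ → ℂ)
    (hv : ∀ t : ℝ, v t = ξ t - (κ : ℂ) *
      ∫ r in Set.Iic t, Complex.exp (-(κ : ℂ) * ((t : ℂ) - (r : ℂ))) * ξ r)
    (hw : ∀ t : ℝ, w t = -(κ : ℂ) *
      ∫ r in Set.Iic t, Complex.exp (-(κ : ℂ) * ((t : ℂ) - (r : ℂ))) * ξ r)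
    (hχ : ∀ p₁ p₂ : ℝ, p₂ ≤ p₁ → χ p₁ p₂ = 4 * (κ : ℂ) *
      Complex.exp (-(κ : ℂ) * ((p₁ : ℂ) + (p₂ : ℂ))) *
      ∫ r in Set.Iic p₂, Complex.exp (2 * (κ : ℂ) * (r : ℂ)) * ξ r * w r) :
    ∀ p₁ p₂ : ℝ, p₂ ≤ p₁ → 0 < p₂ →
      v p₁ * v p₂ + w p₁ * w p₂ + χ p₁ p₂ = 0 ∧
      v p₁ * w p₂ + v p₂ * w p₁ + χ p₁ p₂ = 0 :=
  stmt_16_general κ ξ hm hsupp hint v w χ hv hw hχ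
end

section
/- Let κ > 0 and γ > 0, and define ξ : ℝ → ℂ by ξ(t) = −√γ e^{(γ/2)t} for t ≤ 0 and ξ(t) = 0 for t > 0. Define ν(t) = ξ(t) − κ ∫_{−∞}^{t} e^{−(κ/2)(t − r)} ξ(r) dr. Then ν(t) = ((κ − γ)/(κ + γ))·√γ·e^{(γ/2)t} for t ≤ 0, and ν(t) = (2κ√γ/(κ + γ))·e^{−(κ/2)t} for t > 0. In particular, if γ = κ then ν(t) = 0 for all t ≤ 0 and ν(t) = √κ e^{−(κ/2)t} for t > 0. -/
open MeasureTheory Complex Set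

/-!
Since `ξ` vanishes on `(0, ∞)`, the integral defining `ν t` runs only up to `m = min t 0`, and there
its integrand is the single exponential `-√γ e^{-(κ/2)t} e^{((κ+γ)/2) r}`, whose integral over
`(-∞, m]` is `-√γ e^{(γ/2)m - (κ/2)(t - m)} / ((κ+γ)/2)`.
-/

lemma integral_Iic_exp_mul_exp {a b : ℂ} (hab : 0 < (a + b).re) (t c : ℝ) :
    ∫ r in Iic c, cexp (-a * (t - r)) * cexp (b * r) = cexp (b * c - a * (t - c)) / (a + b) := by
  have hfactor (r : ℝ) :
      cexp (-a * (t - r)) * cexp (b * r) = cexp (-a * t) * cexp ((a + b) * r) := by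
    rw [← Complex.exp_add, ← Complex.exp_add]; ring_nf
  simp_rw [hfactor]
  rw [integral_const_mul, integral_exp_mul_complex_Iic hab, mul_div_assoc', ← Complex.exp_add]
  ring_nf

noncomputable def risingPulse (γ t : ℝ) : ℂ :=
  if t ≤ 0 then -(Real.sqrt γ : ℂ) * Complex.exp ((γ / 2 : ℝ) * (t : ℂ)) else 0

lemma risingPulse_eq_indicator (γ : ℝ) :
    risingPulse γ =
      (Iic (0 : ℝ)).indicator fun r : ℝ => -(Real.sqrt γ : ℂ) * cexp ((γ / 2 : ℝ) * (r : ℂ)) := by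
  ext t
  simp [risingPulse, Set.indicator]

lemma integral_Iic_exp_mul_risingPulse {κ γ : ℝ} (hκγ : 0 < κ + γ) (t : ℝ) :
    ∫ r in Iic t, cexp (-((κ : ℂ) / 2) * ((t : ℂ) - (r : ℂ))) * risingPulse γ r =
      -(2 * Real.sqrt γ / (κ + γ) : ℂ) *
        cexp ((γ / 2 : ℝ) * (min t 0 : ℝ) - (κ / 2 : ℂ) * (t - (min t 0 : ℝ))) := by
  have hre : 0 < ((κ : ℂ) / 2 + ((γ / 2 : ℝ) : ℂ)).re := by
    simp only [add_re, div_ofNat_re, ofReal_re]; linarith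
  simp_rw [risingPulse_eq_indicator,
    ← indicator_mul_right _ fun r : ℝ => cexp (-((κ : ℂ) / 2) * ((t : ℂ) - (r : ℂ)))]
  rw [setIntegral_indicator measurableSet_Iic, Iic_inter_Iic]
  simp_rw [mul_left_comm _ (-(Real.sqrt γ : ℂ)), integral_const_mul, integral_Iic_exp_mul_exp hre]
  push_cast
  field_simp

theorem stmt_17 (κ γ : ℝ) (hκ : 0 < κ) (hγ : 0 < γ) (ξ : ℝ → ℂ)
    (hξ : ∀ t : ℝ, ξ t =
      if t ≤ 0 then -(Real.sqrt γ : ℂ) * Complex.exp ((γ / 2 : ℝ) * (t : ℂ)) else 0)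
    (ν : ℝ → ℂ)
    (hν : ∀ t : ℝ, ν t = ξ t - (κ : ℂ) *
      ∫ r in Set.Iic t,
        Complex.exp (-((κ : ℂ) / 2) * ((t : ℂ) - (r : ℂ))) * ξ r) :
    (∀ t : ℝ, t ≤ 0 →
      ν t = (((κ : ℂ) - (γ : ℂ)) / ((κ : ℂ) + (γ : ℂ))) * (Real.sqrt γ : ℂ) *
        Complex.exp ((γ / 2 : ℝ) * (t : ℂ))) ∧
    (∀ t : ℝ, 0 < t →
      ν t = (2 * (κ : ℂ) * (Real.sqrt γ : ℂ) / ((κ : ℂ) + (γ : ℂ))) *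
        Complex.exp (-((κ : ℂ) / 2) * (t : ℂ))) ∧
    (γ = κ →
      (∀ t : ℝ, t ≤ 0 → ν t = 0) ∧
      (∀ t : ℝ, 0 < t →
        ν t = (Real.sqrt κ : ℂ) * Complex.exp (-((κ : ℂ) / 2) * (t : ℂ)))) := by
  obtain rfl : ξ = risingPulse γ := funext hξ
  have hκγ : 0 < κ + γ := by positivity
  have hκγC : (κ : ℂ) + γ ≠ 0 := by exact_mod_cast hκγ.ne'
  simp_rw [integral_Iic_exp_mul_risingPulse hκγ, risingPulse] at hν
  have before : ∀ t : ℝ, t ≤ 0 →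
      ν t = ((κ - γ) / (κ + γ) : ℂ) * Real.sqrt γ * cexp ((γ / 2 : ℝ) * t) := by
    intro t ht
    rw [hν, if_pos ht, min_eq_left ht]
    field_simp
    ring_nf
  have after : ∀ t : ℝ, 0 < t →
      ν t = (2 * κ * Real.sqrt γ / (κ + γ) : ℂ) * cexp (-(κ / 2) * t) := by
    intro t ht
    rw [hν, if_neg ht.not_ge, min_eq_right ht.le]
    push_cast
    field_simp
    ring_nf
  refine ⟨before, after, fun hγκ => ⟨fun t ht => ?_, fun t ht => ?_⟩⟩
  · simp [before t ht, hγκ]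
  · rw [after t ht, hγκ]
    congr 1
    have : (κ : ℂ) ≠ 0 := by exact_mod_cast hκ.ne'
    field_simp
    ring
end
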